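/- arXiv:1711.06924 — 7 statements merged into one kernel-verified Lean document; each statement's English description precedes it below -/
import Mathlib

section
/- Let E be a smooth real Banach space with duality map J, let C be a convex subset, let p ∈ C be a point, and let z, x ∈ E satisfy z = ε • f(z) + (1-ε) • T z, where f is an α-contraction with f(p) such that (f - I)(p) = x - p, T is nonexpansive with T p = p, and ε ∈ (0,1). Then ‖z - p‖² ≤ (2/(1-α)) ⟨x - p, J(z - p)⟩. -/
/-- in a smooth Banach space with normalized duality map `J`
(characterized by `J y y = ‖y‖²`, `‖J y‖ = ‖y‖` and the subdifferential
inequality `‖u + v‖² ≤ ‖u‖² + 2⟨v, J(u+v)⟩`), the implicit viscosity iterate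
satisfies the quadratic estimate. -/
theorem stmt_3 {E : Type*} [NormedAddCommGroup E] [NormedSpace ℝ E]
    (J : E → (E →L[ℝ] ℝ))
    (hJ : ∀ y : E, J y y = ‖y‖ ^ 2 ∧ ‖J y‖ = ‖y‖)
    (hJineq : ∀ u v : E, ‖u + v‖ ^ 2 ≤ ‖u‖ ^ 2 + 2 * J (u + v) v)
    (C : Set E) (hCv : Convex ℝ C)
    (T f : E → E) (hT : Set.MapsTo T C C) (hf : Set.MapsTo f C C)
    (hTne : ∀ x ∈ C, ∀ y ∈ C, ‖T x - T y‖ ≤ ‖x - y‖)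
    (α : ℝ) (hα0 : 0 ≤ α) (hα1 : α < 1)
    (hfc : ∀ x ∈ C, ∀ y ∈ C, ‖f x - f y‖ ≤ α * ‖x - y‖)
    (p : E) (hp : p ∈ C) (hpfix : T p = p)
    (ε : ℝ) (hε0 : 0 < ε) (hε1 : ε < 1)
    (z x : E) (hzC : z ∈ C)
    (hz : z = ε • f z + (1 - ε) • T z)
    (hx : f p - p = x - p) :
    ‖z - p‖ ^ 2 ≤ (2 / (1 - α)) * J (z - p) (x - p) := by
  set a : E := ε • (f z - f p) + (1 - ε) • (T z - T p) with ha
  have hsum : a + ε • (x - p) = z - p := by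
    rw [ha, ← hx, hpfix]
    nth_rewrite 3 [hz]
    module
  -- norm bound on a
  have hna : ‖a‖ ≤ (1 - ε * (1 - α)) * ‖z - p‖ := by
    have h1 : ‖ε • (f z - f p)‖ ≤ ε * (α * ‖z - p‖) := by
      rw [norm_smul, Real.norm_eq_abs, abs_of_pos hε0]
      exact mul_le_mul_of_nonneg_left (hfc z hzC p hp) hε0.le
    have h2 : ‖(1 - ε) • (T z - T p)‖ ≤ (1 - ε) * ‖z - p‖ := by
      rw [norm_smul, Real.norm_eq_abs, abs_of_pos (by linarith : (0:ℝ) < 1 - ε)]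
      exact mul_le_mul_of_nonneg_left (hTne z hzC p hp) (by linarith)
    calc ‖a‖ ≤ ‖ε • (f z - f p)‖ + ‖(1 - ε) • (T z - T p)‖ := norm_add_le _ _
      _ ≤ ε * (α * ‖z - p‖) + (1 - ε) * ‖z - p‖ := add_le_add h1 h2
      _ = (1 - ε * (1 - α)) * ‖z - p‖ := by ring
  have hkey := hJineq a (ε • (x - p))
  rw [hsum] at hkey
  have hsmul : J (z - p) (ε • (x - p)) = ε * J (z - p) (x - p) := by
    simp [map_smul]
  rw [hsmul] at hkey
  have hnn : (0:ℝ) ≤ ‖z - p‖ := norm_nonneg _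
  have hann : (0:ℝ) ≤ ‖a‖ := norm_nonneg _
  have ht : 0 < ε * (1 - α) := mul_pos hε0 (by linarith)
  have ht1 : ε * (1 - α) < 1 := by nlinarith
  have ha2 : ‖a‖ ^ 2 ≤ (1 - ε * (1 - α)) ^ 2 * ‖z - p‖ ^ 2 := by nlinarith
  -- main combined inequality
  have hmain : ε * (1 - α) * (2 - ε * (1 - α)) * ‖z - p‖ ^ 2
      ≤ 2 * ε * J (z - p) (x - p) := by nlinarith
  have hmain2 : (1 - α) * (2 - ε * (1 - α)) * ‖z - p‖ ^ 2
      ≤ 2 * J (z - p) (x - p) := by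
    have h2 : ε * ((1 - α) * (2 - ε * (1 - α)) * ‖z - p‖ ^ 2)
        ≤ ε * (2 * J (z - p) (x - p)) := by linarith [hmain, (by ring :
          ε * ((1 - α) * (2 - ε * (1 - α)) * ‖z - p‖ ^ 2)
            = ε * (1 - α) * (2 - ε * (1 - α)) * ‖z - p‖ ^ 2), (by ring :
          ε * (2 * J (z - p) (x - p)) = 2 * ε * J (z - p) (x - p))]
    exact le_of_mul_le_mul_left h2 hε0
  have hfac : (0:ℝ) ≤ (1 - α) * (2 - ε * (1 - α)) * ‖z - p‖ ^ 2 := by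
    have : (0:ℝ) ≤ (1 - α) * (2 - ε * (1 - α)) :=
      mul_nonneg (by linarith) (by linarith)
    exact mul_nonneg this (sq_nonneg _)
  have hP : 0 ≤ J (z - p) (x - p) := by linarith
  rw [div_mul_eq_mul_div, le_div_iff₀ (by linarith : (0:ℝ) < 1 - α)]
  nlinarith [mul_nonneg (mul_nonneg (by linarith : (0:ℝ) ≤ 1 - α)
    (by linarith : (0:ℝ) ≤ 1 - ε * (1 - α))) (sq_nonneg ‖z - p‖)]
end

section
/- In a real Hilbert space H, suppose z = ε • f(z) + (1-ε) • T z where T : C → C is nonexpansive with T p = p, f : C → C is an α-contraction (0 ≤ α < 1), ε ∈ (0,1), and x ∈ C satisfies f(p) - p = x - p. Then ‖z - p‖² ≤ (2/(1-α)) ⟨x - p, z - p⟩. -/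
open RealInnerProductSpace

theorem stmt_4 {H : Type*} [NormedAddCommGroup H] [InnerProductSpace ℝ H]
    (C : Set H) (hC : C.Nonempty) (hCv : Convex ℝ C)
    (T f : H → H) (hT : Set.MapsTo T C C) (hf : Set.MapsTo f C C)
    (hTne : ∀ x ∈ C, ∀ y ∈ C, ‖T x - T y‖ ≤ ‖x - y‖)
    (α : ℝ) (hα0 : 0 ≤ α) (hα1 : α < 1)
    (hfc : ∀ x ∈ C, ∀ y ∈ C, ‖f x - f y‖ ≤ α * ‖x - y‖)
    (p : H) (hp : p ∈ C) (hpfix : T p = p)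
    (ε : ℝ) (hε0 : 0 < ε) (hε1 : ε < 1)
    (z : H) (hzC : z ∈ C) (hz : z = ε • f z + (1 - ε) • T z)
    (x : H) (hxC : x ∈ C) (hx : f p - p = x - p) :
    ‖z - p‖ ^ 2 ≤ (2 / (1 - α)) * ⟪x - p, z - p⟫ := by
  have h1 : ⟪T z - p, z - p⟫ ≤ ‖z - p‖ ^ 2 := by
    have hn := hTne z hzC p hp
    rw [hpfix] at hn
    calc ⟪T z - p, z - p⟫ ≤ ‖T z - p‖ * ‖z - p‖ := real_inner_le_norm _ _
      _ ≤ ‖z - p‖ * ‖z - p‖ := by nlinarith [norm_nonneg (z - p)]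
      _ = ‖z - p‖ ^ 2 := (sq _).symm
  have h2 : ⟪f z - p, z - p⟫ ≤ α * ‖z - p‖ ^ 2 + ⟪x - p, z - p⟫ := by
    have hsplit : f z - p = (f z - f p) + (x - p) := by rw [← hx]; abel
    rw [hsplit, inner_add_left]
    have : ⟪f z - f p, z - p⟫ ≤ α * ‖z - p‖ ^ 2 := by
      calc ⟪f z - f p, z - p⟫ ≤ ‖f z - f p‖ * ‖z - p‖ := real_inner_le_norm _ _
        _ ≤ (α * ‖z - p‖) * ‖z - p‖ := by
            have := hfc z hzC p hp
            nlinarith [norm_nonneg (z - p)]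
        _ = α * ‖z - p‖ ^ 2 := by ring
    linarith
  have hzp : z - p = ε • (f z - p) + (1 - ε) • (T z - p) := by
    nth_rewrite 1 [hz]; module
  have hA : ‖z - p‖ ^ 2 = ε * ⟪f z - p, z - p⟫ + (1 - ε) * ⟪T z - p, z - p⟫ := by
    rw [← real_inner_self_eq_norm_sq]
    nth_rewrite 1 [hzp]
    rw [inner_add_left, real_inner_smul_left, real_inner_smul_left]
  have h4 : (1 - α) * ‖z - p‖ ^ 2 ≤ ⟪x - p, z - p⟫ := by nlinarith
  rw [div_mul_eq_mul_div, le_div_iff₀ (by linarith)]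
  nlinarith [sq_nonneg ‖z - p‖]
end

section
/- Let C be a nonempty compact convex subset of a real Hilbert space H, let T : C → C be nonexpansive with Fix(T) ≠ ∅, let f : C → C be an α-contraction with 0 ≤ α < 1, and let (ε_n) ⊆ (0,1) with ε_n → 0. For each n, let z_n be the unique fixed point of x ↦ ε_n • f(x) + (1-ε_n) • T x. If ‖z_n - T z_n‖ → 0, then z_n converges strongly to P x₀, where P is the nearest-point projection onto Fix(T) and x₀ is the unique fixed point of f ∘ P. -/
open RealInnerProductSpace

section Aux

variable {H : Type*} [NormedAddCommGroup H] [InnerProductSpace ℝ H]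

/-- The fixed point set (intersected with `C`) of a nonexpansive map is convex. -/
lemma fixedPoints_convex (C : Set H) (hCv : Convex ℝ C) (T : H → H)
    (hTne : ∀ x ∈ C, ∀ y ∈ C, ‖T x - T y‖ ≤ ‖x - y‖) :
    Convex ℝ {w ∈ C | T w = w} := by
  rintro x ⟨hxC, hxT⟩ y ⟨hyC, hyT⟩ a b ha hb hab
  have hmC : a • x + b • y ∈ C := hCv hxC hyC ha hb hab
  refine ⟨hmC, ?_⟩
  set m := a • x + b • y with hm
  rcases eq_or_lt_of_le ha with ha0 | ha0
  · have hb1 : b = 1 := by linarith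
    have hme : m = y := by rw [hm, ← ha0, hb1]; simp
    rw [hme, hyT]
  rcases eq_or_lt_of_le hb with hb0 | hb0
  · have ha1 : a = 1 := by linarith
    have hme : m = x := by rw [hm, ← hb0, ha1]; simp
    rw [hme, hxT]
  by_cases hxy : x = y
  · have hme : m = x := by rw [hm, hxy, ← add_smul, hab, one_smul]
    rw [hme]; nth_rewrite 2 [hxy]; rw [hxy, hyT]
  have hd : (0:ℝ) < ‖x - y‖ := by
    rw [norm_pos_iff, sub_ne_zero]; exact hxy
  set d := ‖x - y‖ with hdd
  have hxm : x - m = b • (x - y) := by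
    have hb' : b = 1 - a := by linarith
    rw [hm, hb']; module
  have hmy : m - y = a • (x - y) := by
    have hb' : b = 1 - a := by linarith
    rw [hm, hb']; module
  set u := x - T m with hu
  set w := T m - y with hw
  have huw : u + w = x - y := by rw [hu, hw]; abel
  have hnu : ‖u‖ ≤ b * d := by
    have h1 := hTne x hxC m hmC
    rw [hxT] at h1
    calc ‖u‖ ≤ ‖x - m‖ := h1
    _ = b * d := by rw [hxm, norm_smul, Real.norm_eq_abs, abs_of_pos hb0]
  have hnw : ‖w‖ ≤ a * d := by
    have h1 := hTne m hmC y hyC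
    rw [hyT] at h1
    calc ‖w‖ ≤ ‖m - y‖ := h1
    _ = a * d := by rw [hmy, norm_smul, Real.norm_eq_abs, abs_of_pos ha0]
  have htri : d ≤ ‖u‖ + ‖w‖ := by
    calc d = ‖u + w‖ := by rw [huw]
    _ ≤ ‖u‖ + ‖w‖ := norm_add_le _ _
  have hnu' : ‖u‖ = b * d := le_antisymm hnu (by nlinarith)
  have hnw' : ‖w‖ = a * d := le_antisymm hnw (by nlinarith)
  have hsum : ‖u + w‖ = ‖u‖ + ‖w‖ := by
    rw [huw, hnu', hnw']; nlinarith
  have hinner : ⟪u, w⟫ = ‖u‖ * ‖w‖ := by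
    have hsq : ‖u + w‖ ^ 2 = ‖u‖ ^ 2 + 2 * ⟪u, w⟫ + ‖w‖ ^ 2 := norm_add_sq_real u w
    rw [hsum] at hsq
    nlinarith
  have hkey : ‖w‖ • u = ‖u‖ • w := inner_eq_norm_mul_iff_real.mp hinner
  rw [hnu', hnw'] at hkey
  have hkey' : a • u = b • w := by
    have h2 : d • (a • u) = d • (b • w) := by
      rw [smul_smul, smul_smul, mul_comm d a, mul_comm d b]
      exact hkey
    exact smul_right_injective H (ne_of_gt hd) h2
  have hub : u = b • (x - y) := by
    calc u = (a + b) • u := by rw [hab, one_smul]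
    _ = b • u + a • u := by rw [add_smul]; abel
    _ = b • u + b • w := by rw [hkey']
    _ = b • (u + w) := by rw [smul_add]
    _ = b • (x - y) := by rw [huw]
  have h3 : x - m = x - T m := by rw [hxm, ← hub]
  exact (sub_right_injective h3).symm

/-- Lipschitz-type sequential continuity helper. -/
lemma tendsto_of_lip {g : H → H} {L : ℝ} {s : ℕ → H} {v : H}
    (hg : ∀ n, ‖g (s n) - g v‖ ≤ L * ‖s n - v‖)
    (hs : Filter.Tendsto s Filter.atTop (nhds v)) :
    Filter.Tendsto (fun n => g (s n)) Filter.atTop (nhds (g v)) := by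
  rw [tendsto_iff_norm_sub_tendsto_zero] at hs ⊢
  have h0 : Filter.Tendsto (fun n => L * ‖s n - v‖) Filter.atTop (nhds 0) := by
    simpa using hs.const_mul L
  exact squeeze_zero (fun n => norm_nonneg _) hg h0

end Aux

theorem stmt_5 {H : Type*} [NormedAddCommGroup H] [InnerProductSpace ℝ H]
    (C : Set H) (hC : C.Nonempty) (hCc : IsCompact C) (hCv : Convex ℝ C)
    (T f P : H → H) (hT : Set.MapsTo T C C) (hf : Set.MapsTo f C C)
    (hTne : ∀ x ∈ C, ∀ y ∈ C, ‖T x - T y‖ ≤ ‖x - y‖)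
    (hFix : ∃ p ∈ C, T p = p)
    (α : ℝ) (hα0 : 0 ≤ α) (hα1 : α < 1)
    (hfc : ∀ x ∈ C, ∀ y ∈ C, ‖f x - f y‖ ≤ α * ‖x - y‖)
    (ε : ℕ → ℝ) (hε : ∀ n, ε n ∈ Set.Ioo (0 : ℝ) 1)
    (hε0 : Filter.Tendsto ε Filter.atTop (nhds 0))
    (z : ℕ → H) (hzC : ∀ n, z n ∈ C)
    (hz : ∀ n, z n = ε n • f (z n) + (1 - ε n) • T (z n))
    (hreg : Filter.Tendsto (fun n => ‖z n - T (z n)‖) Filter.atTop (nhds 0))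
    (hP : ∀ x ∈ C, (P x ∈ C ∧ T (P x) = P x) ∧
      ∀ w ∈ C, T w = w → ‖x - P x‖ ≤ ‖x - w‖)
    (x₀ : H) (hx₀C : x₀ ∈ C) (hx₀ : f (P x₀) = x₀) :
    Filter.Tendsto z Filter.atTop (nhds (P x₀)) := by
  obtain ⟨⟨hqC, hqT⟩, hqmin⟩ := hP x₀ hx₀C
  set q := P x₀ with hqdef
  set K : Set H := {w ∈ C | T w = w} with hK
  have hKconv : Convex ℝ K := fixedPoints_convex C hCv T hTne
  have hqK : q ∈ K := ⟨hqC, hqT⟩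
  -- variational inequality for q
  have hVIq : ∀ w ∈ K, ⟪x₀ - q, w - q⟫ ≤ 0 := by
    have hne : Nonempty K := ⟨⟨q, hqK⟩⟩
    have heq : ‖x₀ - q‖ = ⨅ w : K, ‖x₀ - w‖ := by
      apply le_antisymm
      · exact le_ciInf fun w => hqmin w w.2.1 w.2.2
      · exact ciInf_le ⟨0, fun r ⟨w, hw⟩ => hw ▸ norm_nonneg _⟩ (⟨q, hqK⟩ : K)
    exact (norm_eq_iInf_iff_real_inner_le_zero hKconv hqK).mp heq
  -- variational inequality for each z n
  have hVIn : ∀ n, ∀ w ∈ K, ⟪f (z n) - z n, w - z n⟫ ≤ 0 := by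
    intro n w hwK
    obtain ⟨hwC, hwT⟩ := hwK
    set a := z n with hadef
    obtain ⟨he0, he1⟩ := hε n
    set e := ε n with hedef
    have hsplit : a - w = e • (f a - w) + (1 - e) • (T a - w) := by
      calc a - w = (e • f a + (1 - e) • T a) - w := by rw [hedef, ← hz n]
      _ = e • (f a - w) + (1 - e) • (T a - w) := by module
    have hTa : ⟪T a - w, a - w⟫ ≤ ‖a - w‖ * ‖a - w‖ := by
      calc ⟪T a - w, a - w⟫ ≤ ‖T a - w‖ * ‖a - w‖ := real_inner_le_norm _ _
      _ ≤ ‖a - w‖ * ‖a - w‖ := by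
          apply mul_le_mul_of_nonneg_right _ (norm_nonneg _)
          have h1 := hTne a (hzC n) w hwC
          rwa [hwT] at h1
    have hexp : ‖a - w‖ * ‖a - w‖
        = e * ⟪f a - w, a - w⟫ + (1 - e) * ⟪T a - w, a - w⟫ := by
      rw [← real_inner_self_eq_norm_mul_norm]
      nth_rewrite 1 [hsplit]
      rw [inner_add_left, real_inner_smul_left, real_inner_smul_left]
    have hiq : ‖a - w‖ * ‖a - w‖ ≤ ⟪f a - w, a - w⟫ := by
      nlinarith [hexp, hTa]
    have hdecomp : ⟪f a - w, a - w⟫ = ⟪f a - a, a - w⟫ + ‖a - w‖ * ‖a - w‖ := by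
      rw [← real_inner_self_eq_norm_mul_norm, ← inner_add_left]
      congr 1; abel
    have h5 : 0 ≤ ⟪f a - a, a - w⟫ := by linarith [hiq, hdecomp.symm.le, hdecomp.le]
    have h6 : ⟪f a - a, w - a⟫ = -⟪f a - a, a - w⟫ := by
      rw [← inner_neg_right]; congr 1; abel
    rw [h6]; linarith
  -- main argument via subsequences
  apply Filter.tendsto_of_subseq_tendsto
  intro ns hns
  obtain ⟨v, hvC, φ, hφ, hφtend⟩ := hCc.tendsto_subseq (fun k => hzC (ns k))
  refine ⟨φ, ?_⟩
  set y : ℕ → H := fun k => z (ns (φ k)) with hy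
  have hytend : Filter.Tendsto y Filter.atTop (nhds v) := hφtend
  have hnsφ : Filter.Tendsto (fun k => ns (φ k)) Filter.atTop Filter.atTop :=
    hns.comp hφ.tendsto_atTop
  -- T v = v
  have hTy : Filter.Tendsto (fun k => T (y k)) Filter.atTop (nhds (T v)) := by
    apply tendsto_of_lip (L := 1) _ hytend
    intro k; simpa using hTne (y k) (hzC _) v hvC
  have hregy : Filter.Tendsto (fun k => ‖y k - T (y k)‖) Filter.atTop (nhds 0) :=
    hreg.comp hnsφ
  have hvT : T v = v := by
    have hlim : Filter.Tendsto (fun k => ‖y k - T (y k)‖) Filter.atTop (nhds ‖v - T v‖) :=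
      ((hytend.sub hTy).norm)
    have : ‖v - T v‖ = 0 := tendsto_nhds_unique hlim hregy
    rw [norm_eq_zero, sub_eq_zero] at this
    exact this.symm
  have hvK : v ∈ K := ⟨hvC, hvT⟩
  -- f continuity along y
  have hfy : Filter.Tendsto (fun k => f (y k)) Filter.atTop (nhds (f v)) := by
    apply tendsto_of_lip (L := α) _ hytend
    intro k; exact hfc (y k) (hzC _) v hvC
  -- VI for v
  have hVIv : ∀ w ∈ K, ⟪f v - v, w - v⟫ ≤ 0 := by
    intro w hwK
    have hlim : Filter.Tendsto (fun k => ⟪f (y k) - y k, w - y k⟫)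
        Filter.atTop (nhds ⟪f v - v, w - v⟫) :=
      (hfy.sub hytend).inner (tendsto_const_nhds.sub hytend)
    exact le_of_tendsto hlim (Filter.Eventually.of_forall fun k => hVIn _ w hwK)
  -- combine to get v = q
  have h1 : ⟪f v - v, q - v⟫ ≤ 0 := hVIv q hqK
  have h2 : ⟪f q - q, v - q⟫ ≤ 0 := by rw [hx₀]; exact hVIq v hvK
  have hid : ⟪f v - f q, v - q⟫
      = ⟪v - q, v - q⟫ - ⟪v - f v, v - q⟫ - ⟪f q - q, v - q⟫ := by
    rw [← inner_sub_left, ← inner_sub_left]; congr 1; abel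
  have h1' : ⟪f v - v, q - v⟫ = ⟪v - f v, v - q⟫ := by
    rw [show q - v = -(v - q) by abel, show f v - v = -(v - f v) by abel,
      inner_neg_neg]
  have hcs : ⟪f v - f q, v - q⟫ ≤ α * (‖v - q‖ * ‖v - q‖) := by
    calc ⟪f v - f q, v - q⟫ ≤ ‖f v - f q‖ * ‖v - q‖ := real_inner_le_norm _ _
    _ ≤ (α * ‖v - q‖) * ‖v - q‖ :=
        mul_le_mul_of_nonneg_right (hfc v hvC q hqC) (norm_nonneg _)
    _ = α * (‖v - q‖ * ‖v - q‖) := by ring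
  have hself : ⟪v - q, v - q⟫ = ‖v - q‖ * ‖v - q‖ := real_inner_self_eq_norm_mul_norm _
  have hvq : v = q := by
    have hle : ‖v - q‖ * ‖v - q‖ ≤ α * (‖v - q‖ * ‖v - q‖) := by
      rw [h1'] at h1
      linarith [hid.symm.le, hid.le, hcs, hself.le, hself.symm.le]
    have : ‖v - q‖ * ‖v - q‖ ≤ 0 := by nlinarith
    have hn0 : ‖v - q‖ = 0 := by nlinarith [norm_nonneg (v - q)]
    rwa [norm_eq_zero, sub_eq_zero] at hn0
  rw [← hvq]
  exact hytend
end

section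
/- Let C be a nonempty compact convex subset of a real Hilbert space H and let T : C → C be nonexpansive. For ε > 0, let F_ε(T) = {x ∈ C : ‖x - Tx‖ ≤ ε}. Then for every ε > 0 there exists δ > 0 such that the closed convex hull of F_δ(T) translated by any vector of norm at most 2δ lies in F_ε(T); that is, co̅(F_δ(T)) + 2B_δ ⊆ F_ε(T), where the sum is taken inside C (for points of the sum lying in C). -/
/-!
In a strictly convex space the fixed points of a nonexpansive map on a convex set form a
convex set `Fix`. By compactness of `C`, points of small displacement `δ` lie near `Fix`, and
the closed neighbourhoods of the convex set `Fix` are closed and convex, so they also contain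
the closed convex hull of `F_δ`. A point `z` within `ε / 2` of some `p ∈ Fix` has
`‖z - T z‖ ≤ ‖z - p‖ + ‖T p - T z‖ ≤ ε`.
-/

open Metric Set Function

def approxFixedPoints {E : Type*} [SeminormedAddCommGroup E] (T : E → E) (C : Set E) (δ : ℝ) :
    Set E :=
  {x | x ∈ C ∧ ‖x - T x‖ ≤ δ}

theorem approxFixedPoints_mono {E : Type*} [SeminormedAddCommGroup E] {T : E → E} {C : Set E}
    {δ δ' : ℝ} (h : δ ≤ δ') : approxFixedPoints T C δ ⊆ approxFixedPoints T C δ' :=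
  fun _ hx ↦ ⟨hx.1, hx.2.trans h⟩

theorem norm_sub_le_two_mul_of_isFixedPt {E : Type*} [SeminormedAddCommGroup E] {T : E → E}
    {C : Set E} (hT : LipschitzOnWith 1 T C) {p z : E} (hp : p ∈ C) (hpT : IsFixedPt T p)
    (hz : z ∈ C) : ‖z - T z‖ ≤ 2 * ‖z - p‖ := by
  simp only [← dist_eq_norm]
  calc dist z (T z) ≤ dist z p + dist (T p) (T z) := by rw [hpT.eq]; exact dist_triangle ..
    _ ≤ dist z p + dist p z := by gcongr; simpa using hT.dist_le_mul p hp z hz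
    _ = 2 * dist z p := by rw [dist_comm p]; ring

section StrictConvex

variable {E : Type*} [NormedAddCommGroup E] [NormedSpace ℝ E] [StrictConvexSpace ℝ E]
  {C : Set E} {T : E → E}

theorem Convex.inter_fixedPoints_of_lipschitzOnWith_one (hC : Convex ℝ C)
    (hT : LipschitzOnWith 1 T C) : Convex ℝ (C ∩ fixedPoints T) := by
  refine convex_iff_segment_subset.2 fun p ⟨hpC, hpT⟩ q ⟨hqC, hqT⟩ m hm ↦ ?_
  have hmC : m ∈ C := hC.segment_subset hpC hqC hm
  rw [segment_eq_image_lineMap] at hm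
  obtain ⟨b, ⟨hb₀, hb₁⟩, hmb⟩ := hm
  have hTm_p : dist p (T m) ≤ b * dist p q := by
    calc dist p (T m) = dist (T m) (T p) := by rw [hpT.eq, dist_comm]
      _ ≤ dist m p := by simpa using hT.dist_le_mul m hmC p hpC
      _ = b * dist p q := by rw [← hmb, dist_lineMap_left, Real.norm_of_nonneg hb₀]
  have hTm_q : dist (T m) q ≤ (1 - b) * dist p q := by
    calc dist (T m) q = dist (T m) (T q) := by rw [hqT.eq]
      _ ≤ dist m q := by simpa using hT.dist_le_mul m hmC q hqC
      _ = (1 - b) * dist p q := by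
        rw [← hmb, dist_lineMap_right, Real.norm_of_nonneg (by linarith)]
  -- Both bounds are therefore equalities, which in a strictly convex space pins `T m` to `m`.
  have htri := dist_triangle p (T m) q
  exact ⟨hmC, (eq_lineMap_of_dist_eq_mul_of_dist_eq_mul (by linarith) (by linarith)).trans hmb⟩

end StrictConvex

theorem IsCompact.exists_pos_sublevel_subset {X : Type*} [TopologicalSpace X] {K U : Set X}
    {g : X → ℝ} (hK : IsCompact K) (hg : ContinuousOn g K) (hU : IsOpen U)
    (hgU : ∀ x ∈ K, g x ≤ 0 → x ∈ U) : ∃ δ > 0, ∀ x ∈ K, g x ≤ δ → x ∈ U := by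
  rcases (K \ U).eq_empty_or_nonempty with hKU | hKU
  · exact ⟨1, one_pos, fun x hx _ ↦ by_contra fun hxU ↦ hKU.subset ⟨hx, hxU⟩⟩
  obtain ⟨x₀, ⟨hx₀K, hx₀U⟩, hmin⟩ :=
    (hK.diff hU).exists_isMinOn hKU (hg.mono sdiff_subset)
  have hgx₀ : 0 < g x₀ := not_le.1 fun h ↦ hx₀U (hgU x₀ hx₀K h)
  refine ⟨g x₀ / 2, half_pos hgx₀, fun x hxK hx ↦ by_contra fun hxU ↦ ?_⟩
  have : g x₀ ≤ g x := hmin ⟨hxK, hxU⟩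
  linarith

theorem exists_pos_closure_convexHull_approxFixedPoints_subset_thickening {E : Type*}
    [NormedAddCommGroup E] [NormedSpace ℝ E] [StrictConvexSpace ℝ E] {C : Set E} {T : E → E}
    (hCc : IsCompact C) (hCv : Convex ℝ C) (hT : LipschitzOnWith 1 T C) {η : ℝ} (hη : 0 < η) :
    ∃ δ > 0, closure (convexHull ℝ (approxFixedPoints T C δ)) ⊆
      thickening η (C ∩ fixedPoints T) := by
  have hdisp : ContinuousOn (fun x ↦ ‖x - T x‖) C :=
    (continuousOn_id.sub hT.continuousOn).norm
  obtain ⟨δ, hδ, hnear⟩ := hCc.exists_pos_sublevel_subset hdisp isOpen_thickening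
    fun x hxC hx ↦ self_subset_thickening (half_pos hη) _
      (mem_inter hxC (sub_eq_zero.1 (norm_le_zero_iff.1 hx)).symm)
  refine ⟨δ, hδ, ?_⟩
  have hcth : closure (convexHull ℝ (approxFixedPoints T C δ)) ⊆
      cthickening (η / 2) (C ∩ fixedPoints T) :=
    closure_minimal
      (convexHull_min (fun x hx ↦ thickening_subset_cthickening _ _ (hnear x hx.1 hx.2))
        ((hCv.inter_fixedPoints_of_lipschitzOnWith_one hT).cthickening _))
      isClosed_cthickening
  exact hcth.trans (cthickening_subset_thickening' hη (half_lt_self hη) _)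

theorem stmt_8_general {H : Type*} [NormedAddCommGroup H] [InnerProductSpace ℝ H]
    (C : Set H) (hCc : IsCompact C) (hCv : Convex ℝ C)
    (T : H → H)
    (hTne : ∀ x ∈ C, ∀ y ∈ C, ‖T x - T y‖ ≤ ‖x - y‖) :
    ∀ ε : ℝ, 0 < ε → ∃ δ : ℝ, 0 < δ ∧
      ∀ y ∈ closure (convexHull ℝ {x | x ∈ C ∧ ‖x - T x‖ ≤ δ}),
        ∀ b : H, ‖b‖ < 2 * δ → y + b ∈ C → ‖(y + b) - T (y + b)‖ ≤ ε := by
  intro ε hε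
  have hT : LipschitzOnWith 1 T C := LipschitzOnWith.of_dist_le_mul fun x hx y hy ↦ by
    simpa [dist_eq_norm] using hTne x hx y hy
  obtain ⟨δ₀, hδ₀, hsub⟩ :=
    exists_pos_closure_convexHull_approxFixedPoints_subset_thickening hCc hCv hT (η := ε / 3)
      (by positivity)
  refine ⟨min δ₀ (ε / 12), by positivity, fun y hy b hb hybC ↦ ?_⟩
  obtain ⟨p, ⟨hpC, hpT⟩, hyp⟩ := mem_thickening_iff.1
    (hsub (closure_mono (convexHull_mono (approxFixedPoints_mono (min_le_left _ _))) hy))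
  rw [dist_eq_norm] at hyp
  calc ‖(y + b) - T (y + b)‖ ≤ 2 * ‖(y + b) - p‖ :=
        norm_sub_le_two_mul_of_isFixedPt hT hpC hpT hybC
    _ ≤ 2 * (‖y - p‖ + ‖b‖) := by rw [add_sub_right_comm]; gcongr; exact norm_add_le _ _
    _ ≤ ε := by linarith [min_le_right δ₀ (ε / 12)]

theorem stmt_8 {H : Type*} [NormedAddCommGroup H] [InnerProductSpace ℝ H]
    (C : Set H) (hC : C.Nonempty) (hCc : IsCompact C) (hCv : Convex ℝ C)
    (T : H → H) (hT : Set.MapsTo T C C)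
    (hTne : ∀ x ∈ C, ∀ y ∈ C, ‖T x - T y‖ ≤ ‖x - y‖) :
    ∀ ε : ℝ, 0 < ε → ∃ δ : ℝ, 0 < δ ∧
      ∀ y ∈ closure (convexHull ℝ {x | x ∈ C ∧ ‖x - T x‖ ≤ δ}),
        ∀ b : H, ‖b‖ < 2 * δ → y + b ∈ C → ‖(y + b) - T (y + b)‖ ≤ ε :=
  stmt_8_general C hCc hCv T hTne
end

section
/- Let C be a nonempty closed convex subset of a real Hilbert space H, T : C → C nonexpansive, and x ∈ C. Then for every δ > 0 there exists N ∈ ℕ such that for all m ≥ N and all y ∈ C, the Cesàro average A_m y = (1/(m+1)) Σ_{j=0}^{m} T^j y satisfies ‖A_m y - T(A_m y)‖ ≤ δ, provided C is bounded. -/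
/-!
Write `A` for the Cesàro mean of the orbit `y, T y, …, T^m y` and `A'` for that of
`T y, …, T^(m+1) y`. Nonexpansiveness gives `‖T A - T^(j+1) y‖ ≤ ‖A - T^j y‖` for every `j`;
summing the squares and expanding both sides around their means leaves
`(m+1) ‖T A - A'‖² ≤ ‖y‖² - ‖T^(m+1) y‖² + (m+1) (‖A'‖² - ‖A‖²)`.
Since `A' - A = (T^(m+1) y - y) / (m+1)`, both the right-hand side and `(m+1) ‖A' - A‖` are
bounded in terms of a bound `M` on the norms of the points of `C`, whence `(m+1) ‖A - T A‖² ≤ 18 M²`.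
-/

open Finset Set

section

variable {ι H : Type*} [NormedAddCommGroup H] [InnerProductSpace ℝ H]

theorem sum_norm_sub_sq_eq_of_card_smul_eq (s : Finset ι) (f : ι → H) (a : H) {c : H}
    (hc : (#s : ℝ) • c = ∑ i ∈ s, f i) :
    ∑ i ∈ s, ‖a - f i‖ ^ 2 = #s * ‖a - c‖ ^ 2 + ∑ i ∈ s, ‖f i‖ ^ 2 - #s * ‖c‖ ^ 2 := by
  have hinner : ∑ i ∈ s, inner ℝ a (f i) = #s * inner ℝ a c := by
    rw [← inner_sum, ← hc, real_inner_smul_right]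
  simp only [norm_sub_sq_real, sum_add_distrib, sum_sub_distrib, sum_const, nsmul_eq_mul,
    ← mul_sum, hinner]
  ring

noncomputable def cesaroMean (T : H → H) (m : ℕ) (y : H) : H :=
  (m + 1 : ℝ)⁻¹ • ∑ j ∈ range (m + 1), T^[j] y

theorem card_smul_cesaroMean (T : H → H) (m : ℕ) (y : H) :
    (#(range (m + 1)) : ℝ) • cesaroMean T m y = ∑ j ∈ range (m + 1), T^[j] y := by
  rw [card_range, cesaroMean, Nat.cast_succ, smul_inv_smul₀ (Nat.cast_add_one_ne_zero m)]

theorem cesaroMean_apply_sub_cesaroMean (T : H → H) (m : ℕ) (y : H) :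
    cesaroMean T m (T y) - cesaroMean T m y = (m + 1 : ℝ)⁻¹ • (T^[m + 1] y - y) := by
  rw [cesaroMean, cesaroMean, ← smul_sub, ← sum_sub_distrib]
  simp only [← Function.iterate_succ_apply]
  exact congrArg _ (sum_range_sub (fun j => T^[j] y) (m + 1))

variable {C : Set H} {T : H → H}

theorem Convex.cesaroMean_mem (hCv : Convex ℝ C) (hT : MapsTo T C C) {y : H} (hy : y ∈ C)
    (m : ℕ) : cesaroMean T m y ∈ C := by
  rw [cesaroMean, smul_sum]
  refine hCv.sum_mem (fun _ _ => by positivity) ?_ fun j _ => hT.iterate j hy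
  rw [sum_const, card_range, nsmul_eq_mul, Nat.cast_succ, mul_inv_cancel₀]
  exact Nat.cast_add_one_ne_zero m

variable (hCv : Convex ℝ C) (hT : MapsTo T C C)
  (hTne : ∀ x ∈ C, ∀ y ∈ C, ‖T x - T y‖ ≤ ‖x - y‖)
include hCv hT hTne

theorem card_mul_norm_apply_cesaroMean_sub_sq_le {y : H} (hy : y ∈ C) (m : ℕ) :
    (m + 1 : ℝ) * ‖T (cesaroMean T m y) - cesaroMean T m (T y)‖ ^ 2 ≤
      ‖y‖ ^ 2 - ‖T^[m + 1] y‖ ^ 2 +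
        (m + 1 : ℝ) * (‖cesaroMean T m (T y)‖ ^ 2 - ‖cesaroMean T m y‖ ^ 2) := by
  have hstep : ∀ j ∈ range (m + 1),
      ‖T (cesaroMean T m y) - T^[j] (T y)‖ ^ 2 ≤ ‖cesaroMean T m y - T^[j] y‖ ^ 2 := by
    intro j _
    rw [← Function.iterate_succ_apply, Function.iterate_succ_apply']
    gcongr
    exact hTne _ (hCv.cesaroMean_mem hT hy m) _ (hT.iterate j hy)
  have hsum := sum_le_sum hstep
  rw [sum_norm_sub_sq_eq_of_card_smul_eq _ _ _ (card_smul_cesaroMean T m (T y)),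
    sum_norm_sub_sq_eq_of_card_smul_eq _ _ _ (card_smul_cesaroMean T m y),
    card_range, Nat.cast_succ] at hsum
  have htelescope : ∑ j ∈ range (m + 1), ‖T^[j] y‖ ^ 2 - ∑ j ∈ range (m + 1), ‖T^[j] (T y)‖ ^ 2
      = ‖y‖ ^ 2 - ‖T^[m + 1] y‖ ^ 2 := by
    simp only [← Function.iterate_succ_apply, ← sum_sub_distrib]
    exact sum_range_sub' (fun j => ‖T^[j] y‖ ^ 2) (m + 1)
  simp only [sub_self, norm_zero] at hsum
  linarith

theorem card_mul_norm_cesaroMean_sub_apply_sq_le {M : ℝ} (hM : ∀ z ∈ C, ‖z‖ ≤ M) {y : H}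
    (hy : y ∈ C) (m : ℕ) :
    (m + 1 : ℝ) * ‖cesaroMean T m y - T (cesaroMean T m y)‖ ^ 2 ≤ 18 * M ^ 2 := by
  set k : ℝ := m + 1
  set A := cesaroMean T m y
  set A' := cesaroMean T m (T y)
  have hk : 1 ≤ k := by simp [k]
  have hyM := hM y hy
  have hAM := hM A (hCv.cesaroMean_mem hT hy m)
  have hA'M := hM A' (hCv.cesaroMean_mem hT (hT hy) m)
  have hdrift : k * ‖A' - A‖ ≤ 2 * M := by
    rw [cesaroMean_apply_sub_cesaroMean, norm_smul, norm_inv, Real.norm_of_nonneg (by positivity),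
      ← mul_assoc, mul_inv_cancel₀ (by positivity), one_mul]
    linarith [norm_sub_le (T^[m + 1] y) y, hM _ (hT.iterate (m + 1) hy)]
  have hsq_diff : ‖A'‖ ^ 2 - ‖A‖ ^ 2 ≤ ‖A' - A‖ * (2 * M) := by
    nlinarith [norm_sub_norm_le A' A, norm_nonneg A, norm_nonneg A', norm_nonneg (A' - A)]
  have hmain : k * ‖T A - A'‖ ^ 2 ≤ 5 * M ^ 2 := by
    have := card_mul_norm_apply_cesaroMean_sub_sq_le hCv hT hTne hy m
    nlinarith [norm_nonneg y, norm_nonneg (A' - A), norm_nonneg A]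
  have htriangle : ‖A - T A‖ ≤ ‖A' - A‖ + ‖T A - A'‖ := by
    simpa only [norm_sub_rev A A', norm_sub_rev A' (T A)] using norm_sub_le_norm_sub_add_norm_sub A A' (T A)
  have hdrift_sq : k * ‖A' - A‖ ^ 2 ≤ 4 * M ^ 2 := by
    have hkd : 0 ≤ k * ‖A' - A‖ := by positivity
    nlinarith [mul_le_mul_of_nonneg_right hk (sq_nonneg ‖A' - A‖)]
  calc k * ‖A - T A‖ ^ 2 ≤ k * (‖A' - A‖ + ‖T A - A'‖) ^ 2 := by gcongr
    _ ≤ k * (2 * ‖A' - A‖ ^ 2 + 2 * ‖T A - A'‖ ^ 2) := by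
        gcongr; nlinarith [sq_nonneg (‖A' - A‖ - ‖T A - A'‖)]
    _ ≤ 18 * M ^ 2 := by nlinarith

end

theorem stmt_9_general {H : Type*} [NormedAddCommGroup H] [InnerProductSpace ℝ H]
    (C : Set H) (hCb : Bornology.IsBounded C)
    (hCv : Convex ℝ C)
    (T : H → H) (hT : Set.MapsTo T C C)
    (hTne : ∀ x ∈ C, ∀ y ∈ C, ‖T x - T y‖ ≤ ‖x - y‖) :
    ∀ δ : ℝ, 0 < δ → ∃ N : ℕ, ∀ m ≥ N, ∀ y ∈ C,
      ‖((m + 1 : ℝ)⁻¹ • ∑ j ∈ Finset.range (m + 1), T^[j] y) -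
          T ((m + 1 : ℝ)⁻¹ • ∑ j ∈ Finset.range (m + 1), T^[j] y)‖ ≤ δ := by
  obtain ⟨M, hM⟩ := isBounded_iff_forall_norm_le.mp hCb
  intro δ hδ
  obtain ⟨N, hN⟩ := exists_nat_ge (18 * M ^ 2 / δ ^ 2)
  refine ⟨N, fun m hm y hy => ?_⟩
  have hbound := card_mul_norm_cesaroMean_sub_apply_sq_le hCv hT hTne hM hy m
  have hm' : 18 * M ^ 2 ≤ δ ^ 2 * (m + 1) := by
    rw [div_le_iff₀' (by positivity)] at hN
    have : (N : ℝ) ≤ m := by exact_mod_cast hm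
    nlinarith
  change ‖cesaroMean T m y - T (cesaroMean T m y)‖ ≤ δ
  rw [← pow_le_pow_iff_left₀ (norm_nonneg _) hδ.le two_ne_zero]
  nlinarith

theorem stmt_9 {H : Type*} [NormedAddCommGroup H] [InnerProductSpace ℝ H]
    (C : Set H) (hC : C.Nonempty) (hCb : Bornology.IsBounded C)
    (hCc : IsClosed C) (hCv : Convex ℝ C)
    (T : H → H) (hT : Set.MapsTo T C C)
    (hTne : ∀ x ∈ C, ∀ y ∈ C, ‖T x - T y‖ ≤ ‖x - y‖) :
    ∀ δ : ℝ, 0 < δ → ∃ N : ℕ, ∀ m ≥ N, ∀ y ∈ C,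
      ‖((m + 1 : ℝ)⁻¹ • ∑ j ∈ Finset.range (m + 1), T^[j] y) -
          T ((m + 1 : ℝ)⁻¹ • ∑ j ∈ Finset.range (m + 1), T^[j] y)‖ ≤ δ :=
  stmt_9_general C hCb hCv T hT hTne
end

section
/- Let C be a compact convex subset of a real Hilbert space H and let S = {T_t : t ∈ S} be a commuting family of nonexpansive self-maps of C (i.e., T_s T_t = T_t T_s = T_{st} for a commutative semigroup S). Then the set of common fixed points ⋂_{t} Fix(T_t) is nonempty, closed, and convex. -/
open Set Metric

section aux

variable {H : Type*} [NormedAddCommGroup H] [InnerProductSpace ℝ H]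

/-- A nonexpansive map on a set is Lipschitz on it, hence continuous on it. -/
private lemma contOn {K : Set H} {f : H → H}
    (hl : ∀ x ∈ K, ∀ y ∈ K, ‖f x - f y‖ ≤ ‖x - y‖) : ContinuousOn f K := by
  have : LipschitzOnWith 1 f K := by
    intro x hx y hy
    rw [edist_dist, edist_dist, dist_eq_norm, dist_eq_norm]
    simpa using ENNReal.ofReal_le_ofReal (hl x hx y hy)
  exact this.continuousOn

/-- The fixed-point set of a nonexpansive self-map of a closed set is closed. -/
private lemma fixClosed {K : Set H} (hKcl : IsClosed K) {f : H → H}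
    (hl : ∀ x ∈ K, ∀ y ∈ K, ‖f x - f y‖ ≤ ‖x - y‖) :
    IsClosed {x ∈ K | f x = x} := by
  have hcont : ContinuousOn (fun x => f x - x) K :=
    (contOn hl).sub continuousOn_id
  have : {x ∈ K | f x = x} = K ∩ (fun x => f x - x) ⁻¹' {0} := by
    ext x; simp [sub_eq_zero]
  rw [this]
  exact hcont.preimage_isClosed_of_isClosed hKcl isClosed_singleton

/-- Existence of a fixed point of a nonexpansive self-map of a nonempty compact
convex subset of a Hilbert space. -/
private lemma exists_fixed {K : Set H} (hne : K.Nonempty) (hc : IsCompact K)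
    (hv : Convex ℝ K) {f : H → H} (hm : Set.MapsTo f K K)
    (hl : ∀ x ∈ K, ∀ y ∈ K, ‖f x - f y‖ ≤ ‖x - y‖) :
    ∃ x ∈ K, f x = x := by
  obtain ⟨x0, hx0⟩ := hne
  -- the approximate fixed point property
  have approx : ∀ ε : ℝ, 0 < ε → ε < 1 → ∃ x ∈ K, ‖f x - x‖ ≤ ε * diam K := by
    intro ε hε hε1
    haveI : CompactSpace K := isCompact_iff_compactSpace.mp hc
    haveI : Nonempty K := ⟨⟨x0, hx0⟩⟩
    -- the contraction `x ↦ ε x0 + (1-ε) f x` on the subtype `K`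
    have hmemF : ∀ p : K, ε • x0 + (1 - ε) • f (p : H) ∈ K := fun p =>
      hv hx0 (hm p.2) hε.le (by linarith) (by ring)
    set F : K → K := fun p => ⟨ε • x0 + (1 - ε) • f (p : H), hmemF p⟩ with hF
    have hlip : LipschitzWith (Real.toNNReal (1 - ε)) F := by
      apply LipschitzWith.of_dist_le_mul
      intro p q
      have h1 : dist (F p) (F q) = (1 - ε) * ‖f (p : H) - f (q : H)‖ := by
        rw [Subtype.dist_eq, dist_eq_norm]
        have : (ε • x0 + (1 - ε) • f (p : H)) - (ε • x0 + (1 - ε) • f (q : H))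
            = (1 - ε) • (f (p : H) - f (q : H)) := by
          rw [smul_sub]; abel
        rw [hF]
        simp only [this, norm_smul, Real.norm_eq_abs, abs_of_nonneg (by linarith : (0:ℝ) ≤ 1 - ε)]
      rw [h1, Real.coe_toNNReal _ (by linarith : (0:ℝ) ≤ 1 - ε)]
      have h2 : ‖f (p : H) - f (q : H)‖ ≤ ‖(p : H) - (q : H)‖ := hl _ p.2 _ q.2
      have h3 : dist p q = ‖(p : H) - (q : H)‖ := by
        rw [Subtype.dist_eq, dist_eq_norm]
      rw [h3]
      nlinarith [norm_nonneg (f (p : H) - f (q : H)), norm_nonneg ((p : H) - (q : H))]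
    have hcontr : ContractingWith (Real.toNNReal (1 - ε)) F := by
      refine ⟨?_, hlip⟩
      rw [← NNReal.coe_lt_coe, Real.coe_toNNReal _ (by linarith : (0:ℝ) ≤ 1 - ε)]
      simpa using hε
    set p := hcontr.fixedPoint F with hp
    have hfix : F p = p := hcontr.fixedPoint_isFixedPt
    refine ⟨(p : H), p.2, ?_⟩
    have hfixv : ε • x0 + (1 - ε) • f (p : H) = (p : H) := by
      have := congrArg (Subtype.val) hfix
      simpa [hF] using this
    have hdiff : f (p : H) - (p : H) = ε • (f (p : H) - x0) := by
      have h := hfixv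
      generalize f (p : H) = y at h ⊢
      rw [← h]; module
    rw [hdiff, norm_smul, Real.norm_eq_abs, abs_of_pos hε]
    have hd : ‖f (p : H) - x0‖ ≤ diam K := by
      rw [← dist_eq_norm]
      exact dist_le_diam_of_mem hc.isBounded (hm p.2) hx0
    exact mul_le_mul_of_nonneg_left hd hε.le
  -- minimize `‖f x - x‖` over `K`
  have hcont : ContinuousOn (fun x => ‖f x - x‖) K :=
    ((contOn hl).sub continuousOn_id).norm
  obtain ⟨z, hzK, hzmin⟩ := hc.exists_isMinOn ⟨x0, hx0⟩ hcont
  refine ⟨z, hzK, ?_⟩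
  have hz0 : ‖f z - z‖ ≤ 0 := by
    by_contra h
    push_neg at h
    set D := diam K with hD
    have hD0 : 0 ≤ D := diam_nonneg
    set ε : ℝ := min (1/2) (‖f z - z‖ / (2 * (D + 1))) with hεdef
    have hεpos : 0 < ε := lt_min (by norm_num) (by positivity)
    have hε1 : ε < 1 := lt_of_le_of_lt (min_le_left _ _) (by norm_num)
    obtain ⟨y, hyK, hy⟩ := approx ε hεpos hε1
    have hmin := hzmin hyK
    simp only [Set.mem_setOf_eq] at hmin
    have h2 : ε * D ≤ (‖f z - z‖ / (2 * (D + 1))) * D :=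
      mul_le_mul_of_nonneg_right (min_le_right _ _) hD0
    have h3 : (‖f z - z‖ / (2 * (D + 1))) * D < ‖f z - z‖ := by
      rw [div_mul_eq_mul_div, div_lt_iff₀ (by positivity)]
      nlinarith
    have : ‖f z - z‖ ≤ ε * D := le_trans hmin hy
    linarith
  have : f z - z = 0 := norm_eq_zero.mp (le_antisymm hz0 (norm_nonneg _))
  exact sub_eq_zero.mp this

/-- The fixed-point set of a nonexpansive self-map of a convex set is convex. -/
private lemma fixConvex {K : Set H} (hv : Convex ℝ K) {f : H → H}
    (hm : Set.MapsTo f K K)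
    (hl : ∀ x ∈ K, ∀ y ∈ K, ‖f x - f y‖ ≤ ‖x - y‖) :
    Convex ℝ {x ∈ K | f x = x} := by
  rintro x ⟨hxK, hxf⟩ y ⟨hyK, hyf⟩ a b ha hb hab
  have hzK : a • x + b • y ∈ K := hv hxK hyK ha hb hab
  refine ⟨hzK, ?_⟩
  set z := a • x + b • y with hz
  rcases eq_or_ne x y with rfl | hxy
  · have : z = x := by rw [hz, ← add_smul, hab, one_smul]
    rw [this, hxf]
  · have hfzK : f z ∈ K := hm hzK
    set d := dist x y with hd
    have hdpos : 0 < d := dist_pos.mpr hxy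
    have ha' : a = 1 - b := by linarith
    -- distance estimates
    have hxz : dist x z = b * d := by
      rw [hd, dist_eq_norm, dist_eq_norm]
      have : x - z = b • (x - y) := by
        rw [hz, smul_sub, ha']; module
      rw [this, norm_smul, Real.norm_eq_abs, abs_of_nonneg hb]
    have hzy : dist z y = a * d := by
      rw [hd, dist_eq_norm, dist_eq_norm]
      have : z - y = a • (x - y) := by
        rw [hz, smul_sub, ha']; module
      rw [this, norm_smul, Real.norm_eq_abs, abs_of_nonneg ha]
    have h1 : dist x (f z) ≤ b * d := by
      calc dist x (f z) = ‖f x - f z‖ := by rw [hxf, dist_eq_norm]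
        _ ≤ ‖x - z‖ := hl x hxK z hzK
        _ = dist x z := (dist_eq_norm x z).symm
        _ = b * d := hxz
    have h2 : dist (f z) y ≤ a * d := by
      calc dist (f z) y = ‖f z - f y‖ := by rw [hyf, dist_eq_norm]
        _ ≤ ‖z - y‖ := hl z hzK y hyK
        _ = dist z y := (dist_eq_norm z y).symm
        _ = a * d := hzy
    have htri : d ≤ dist x (f z) + dist (f z) y := dist_triangle x (f z) y
    have hbd : b * d + a * d = d := by rw [← add_mul]; rw [add_comm b a, hab, one_mul]
    have e1 : dist x (f z) = b * d := by linarith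
    have e2 : dist (f z) y = (1 - b) * d := by rw [← ha']; linarith
    have hfz : f z = AffineMap.lineMap x y b :=
      eq_lineMap_of_dist_eq_mul_of_dist_eq_mul e1 e2
    have hzl : z = AffineMap.lineMap x y b := by
      rw [AffineMap.lineMap_apply_module, hz, ha']
    rw [hfz, hzl]

end aux

theorem stmt_15 {H : Type*} [NormedAddCommGroup H] [InnerProductSpace ℝ H]
    {S : Type*} [CommSemigroup S]
    (C : Set H) (hC : C.Nonempty) (hCc : IsCompact C) (hCv : Convex ℝ C)
    (T : S → H → H) (hT : ∀ s, Set.MapsTo (T s) C C)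
    (hTne : ∀ s, ∀ x ∈ C, ∀ y ∈ C, ‖T s x - T s y‖ ≤ ‖x - y‖)
    (hrep : ∀ s t : S, ∀ x ∈ C, T (s * t) x = T s (T t x)) :
    ({x ∈ C | ∀ s, T s x = x}.Nonempty ∧
      IsClosed {x ∈ C | ∀ s, T s x = x} ∧
      Convex ℝ {x ∈ C | ∀ s, T s x = x}) := by
  have hCcl : IsClosed C := hCc.isClosed
  -- each individual fixed point set (within C) is closed
  have hFixCl : ∀ s, IsClosed {x ∈ C | T s x = x} := fun s =>
    fixClosed hCcl (hTne s)
  -- "good" invariant sets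
  let Good : Set H → Prop := fun K =>
    K.Nonempty ∧ K ⊆ C ∧ IsCompact K ∧ Convex ℝ K ∧ ∀ s, Set.MapsTo (T s) K K
  have hGoodC : Good C := ⟨hC, subset_rfl, hCc, hCv, hT⟩
  have step : ∀ K, Good K → ∀ t : S, Good {x ∈ K | T t x = x} := by
    rintro K ⟨hKne, hKC, hKc, hKv, hKm⟩ t
    have hlK : ∀ x ∈ K, ∀ y ∈ K, ‖T t x - T t y‖ ≤ ‖x - y‖ := fun x hx y hy =>
      hTne t x (hKC hx) y (hKC hy)
    have hclosed : IsClosed {x ∈ K | T t x = x} := fixClosed hKc.isClosed hlK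
    refine ⟨?_, fun x hx => hKC hx.1, ?_, fixConvex hKv (hKm t) hlK, ?_⟩
    · obtain ⟨x, hx, hfx⟩ := exists_fixed hKne hKc hKv (hKm t) hlK
      exact ⟨x, hx, hfx⟩
    · exact hKc.of_isClosed_subset hclosed (fun x hx => hx.1)
    · rintro r x ⟨hxK, hxfix⟩
      refine ⟨hKm r hxK, ?_⟩
      have hxC : x ∈ C := hKC hxK
      have h1 : T (t * r) x = T t (T r x) := hrep t r x hxC
      have h2 : T (r * t) x = T r (T t x) := hrep r t x hxC
      rw [mul_comm] at h1
      rw [h1] at h2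
      rw [h2, hxfix]
  -- finite intersections are good (hence nonempty)
  have finInter : ∀ u : Finset S, Good (C ∩ ⋂ s ∈ u, {x ∈ C | T s x = x}) := by
    intro u
    classical
    induction u using Finset.induction_on with
    | empty => simpa using hGoodC
    | @insert t u ht ih =>
        have heq : C ∩ ⋂ s ∈ insert t u, {x ∈ C | T s x = x}
            = {x ∈ C ∩ ⋂ s ∈ u, {x ∈ C | T s x = x} | T t x = x} := by
          ext x
          simp only [Finset.mem_insert, Set.mem_inter_iff, Set.mem_iInter,
            Set.mem_setOf_eq]
          constructor
          · rintro ⟨hxC, h⟩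
            exact ⟨⟨hxC, fun s hs => h s (Or.inr hs)⟩, (h t (Or.inl rfl)).2⟩
          · rintro ⟨⟨hxC, h⟩, hft⟩
            refine ⟨hxC, fun s hs => ?_⟩
            rcases hs with rfl | hs
            · exact ⟨hxC, hft⟩
            · exact h s hs
        rw [heq]
        exact step _ ih t
  -- whole intersection nonempty by compactness
  have hmain : (C ∩ ⋂ s, {x ∈ C | T s x = x}).Nonempty := by
    apply hCc.inter_iInter_nonempty _ hFixCl
    intro u
    exact (finInter u).1
  have hset : {x ∈ C | ∀ s, T s x = x} = C ∩ ⋂ s, {x ∈ C | T s x = x} := by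
    ext x
    simp only [Set.mem_inter_iff, Set.mem_iInter, Set.mem_setOf_eq]
    constructor
    · rintro ⟨hxC, h⟩; exact ⟨hxC, fun s => ⟨hxC, h s⟩⟩
    · rintro ⟨hxC, h⟩; exact ⟨hxC, fun s => (h s).2⟩
  refine ⟨?_, ?_, ?_⟩
  · rw [hset]; exact hmain
  · rw [hset]
    exact hCcl.inter (isClosed_iInter hFixCl)
  · rintro x ⟨hxC, hxf⟩ y ⟨hyC, hyf⟩ a b ha hb hab
    refine ⟨hCv hxC hyC ha hb hab, fun s => ?_⟩
    exact ((fixConvex hCv (hT s) (hTne s)) ⟨hxC, hxf s⟩ ⟨hyC, hyf s⟩ ha hb hab).2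
end

section
/- Let C be a nonempty compact convex subset of a real Hilbert space H, T : C → C nonexpansive, and suppose (z_n) ⊆ C is a sequence such that every strongly convergent subsequence has its limit in Fix(T), and q ∈ Fix(T) and x₀ ∈ C are points such that ‖z_n - q‖² ≤ (2/(1-α)) ⟨x₀ - q, z_n - q⟩ for all n (0 ≤ α < 1) and ⟨x₀ - q, z - q⟩ ≤ 0 for all z ∈ Fix(T). Then z_n → q strongly. -/
open RealInnerProductSpace

theorem stmt_18 {H : Type*} [NormedAddCommGroup H] [InnerProductSpace ℝ H]
    (C : Set H) (hC : C.Nonempty) (hCc : IsCompact C) (hCv : Convex ℝ C)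
    (T : H → H) (hT : Set.MapsTo T C C)
    (hTne : ∀ x ∈ C, ∀ y ∈ C, ‖T x - T y‖ ≤ ‖x - y‖)
    (z : ℕ → H) (hzC : ∀ n, z n ∈ C)
    (hlim : ∀ p : H, (∃ φ : ℕ → ℕ, StrictMono φ ∧
      Filter.Tendsto (fun n => z (φ n)) Filter.atTop (nhds p)) → T p = p)
    (q x₀ : H) (hqC : q ∈ C) (hq : T q = q) (hx₀ : x₀ ∈ C)
    (α : ℝ) (hα0 : 0 ≤ α) (hα1 : α < 1)
    (hquad : ∀ n, ‖z n - q‖ ^ 2 ≤ (2 / (1 - α)) * ⟪x₀ - q, z n - q⟫)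
    (hVI : ∀ w ∈ C, T w = w → ⟪x₀ - q, w - q⟫ ≤ 0) :
    Filter.Tendsto z Filter.atTop (nhds q) := by
  apply Filter.tendsto_of_subseq_tendsto
  intro ns hns
  obtain ⟨p, hpC, φ, hφ, hφt⟩ := hCc.tendsto_subseq (x := fun n => z (ns n)) (fun n => hzC (ns n))
  -- extract strictly monotone subsequence of ns ∘ φ
  obtain ⟨ψ, hψ, hmono⟩ := Filter.strictMono_subseq_of_tendsto_atTop
    (hns.comp hφ.tendsto_atTop)
  have hzt : Filter.Tendsto (fun n => z (ns (φ (ψ n)))) Filter.atTop (nhds p) :=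
    hφt.comp hψ.tendsto_atTop
  have hTp : T p = p := hlim p ⟨fun n => ns (φ (ψ n)), hmono, hzt⟩
  -- p ∈ C so hVI applies
  have hineq : ⟪x₀ - q, p - q⟫ ≤ 0 := hVI p hpC hTp
  -- limit of the quadratic bound
  have h1 : Filter.Tendsto (fun n => ‖z (ns (φ (ψ n))) - q‖ ^ 2)
      Filter.atTop (nhds (‖p - q‖ ^ 2)) := by
    exact ((hzt.sub tendsto_const_nhds).norm.pow 2)
  have h2 : Filter.Tendsto (fun n => (2 / (1 - α)) * ⟪x₀ - q, z (ns (φ (ψ n))) - q⟫)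
      Filter.atTop (nhds ((2 / (1 - α)) * ⟪x₀ - q, p - q⟫)) :=
    (tendsto_const_nhds.inner (hzt.sub tendsto_const_nhds)).const_mul _
  have hle : ‖p - q‖ ^ 2 ≤ (2 / (1 - α)) * ⟪x₀ - q, p - q⟫ :=
    le_of_tendsto_of_tendsto' h1 h2 fun n => hquad _
  have hcpos : 0 ≤ 2 / (1 - α) := div_nonneg (by norm_num) (by linarith)
  have : ‖p - q‖ ^ 2 ≤ 0 := hle.trans (mul_nonpos_of_nonneg_of_nonpos hcpos hineq)
  have hpq : p = q := by
    have : ‖p - q‖ = 0 := by nlinarith [norm_nonneg (p - q)]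
    have := norm_sub_eq_zero_iff.mp this
    exact this
  exact ⟨fun n => φ (ψ n), by simpa [hpq] using hzt⟩
end
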